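/- Let c(t) ∈ ℝ³ be a C¹ camera-center trajectory and Γʷ(t) ∈ ℝ³ a C¹ point trajectory on the contour generator of a surface, with C¹ unit surface normal Nʷ(t) satisfying the occlusion condition ⟨Γʷ(t) − c(t), Nʷ(t)⟩ = 0 for all t, and satisfying the epipolar parametrization Γʷ_t(t) = λ(t)(Γʷ(t) − c(t)) for some scalar function λ. Assume Γʷ(t) ≠ c(t) and Γʷ_t(t) ≠ 0, and define the normal curvature of the surface along the visual direction by Kᵗ = −⟨Γʷ_t, Nʷ_t⟩/⟨Γʷ_t, Γʷ_t⟩. If Kᵗ ≠ 0, then the 3D velocity of the occluding-contour point is Γʷ_t = −(⟨c_t, Nʷ⟩/Kᵗ) · (Γʷ − c)/‖Γʷ − c‖². -/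

import Mathlib

/-!
Differentiating the occlusion condition, and using that the velocity `Γʷ_t = λ (Γʷ - c)` is
tangent, gives `⟨Γʷ - c, Nʷ_t⟩ = ⟨c_t, Nʷ⟩`. Hence `Kᵗ = -⟨c_t, Nʷ⟩ / (λ ‖Γʷ - c‖²)`, and
solving this for `λ` is the claim.
-/

open scoped RealInnerProductSpace

noncomputable section

abbrev V3 : Type := EuclideanSpace ℝ (Fin 3)

section

variable {E : Type*} [NormedAddCommGroup E] [InnerProductSpace ℝ E]

theorem HasDerivAt.inner_add_inner_eq_zero {f g : ℝ → E} {f' g' : E} {t : ℝ}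
    (hf : HasDerivAt f f' t) (hg : HasDerivAt g g' t) (h : ∀ s, ⟪f s, g s⟫ = 0) :
    ⟪f t, g'⟫ + ⟪f', g t⟫ = 0 :=
  (hf.inner ℝ hg).unique <| by simpa only [h] using hasDerivAt_const t (0 : ℝ)

/-- The normal curvature `Kᵗ` of a surface along a curve with velocity `v`, where `n'` is the
rate of change of the unit normal along the curve. -/
def normalCurvature (v n' : E) : ℝ :=
  -(⟪v, n'⟫ / ⟪v, v⟫)

theorem normalCurvature_smul (r : ℝ) (d n' : E) :
    normalCurvature (r • d) n' = -(⟪d, n'⟫ / (r * ‖d‖ ^ 2)) := by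
  rw [normalCurvature, real_inner_smul_left, real_inner_smul_left, real_inner_smul_right,
    real_inner_self_eq_norm_sq]
  rcases eq_or_ne r 0 with rfl | hr
  · simp
  · rw [mul_div_mul_left _ _ hr]

end

theorem eq_div_div_mul_inv {a r D : ℝ} (h : a / (r * D) ≠ 0) :
    r = a / (a / (r * D)) * D⁻¹ := by
  obtain ⟨ha, hrD⟩ := div_ne_zero_iff.mp h
  obtain ⟨-, hD⟩ := mul_ne_zero_iff.mp hrD
  field_simp

theorem occluding_contour_3d_velocity
    (c ct : ℝ → V3)
    (Γw Γwt : ℝ → V3)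
    (Nw Nwt : ℝ → V3)
    (lam : ℝ → ℝ)
    -- C¹ camera-center trajectory and contour-generator point trajectory
    (hct : ∀ t, HasDerivAt c (ct t) t)
    (hΓwt : ∀ t, HasDerivAt Γw (Γwt t) t)
    -- C¹ unit surface normal
    (hNwt : ∀ t, HasDerivAt Nw (Nwt t) t)
    -- occlusion condition: the viewing ray lies in the tangent plane
    (hocc : ∀ t, ⟪Γw t - c t, Nw t⟫ = 0)
    -- epipolar parametrization: the velocity is parallel to the viewing ray
    (hepip : ∀ t, Γwt t = lam t • (Γw t - c t)) :
    ∀ t,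
      (let Kt : ℝ := -(⟪Γwt t, Nwt t⟫ / ⟪Γwt t, Γwt t⟫)
       Kt ≠ 0 →
         Γwt t = (-(⟪ct t, Nw t⟫ / Kt)) • ((‖Γw t - c t‖ ^ 2)⁻¹ • (Γw t - c t))) := by
  intro t
  have hvel_tangent : ⟪Γwt t, Nw t⟫ = 0 := by
    rw [hepip t, real_inner_smul_left, hocc t, mul_zero]
  have hray_normal_rate : ⟪Γw t - c t, Nwt t⟫ = ⟪ct t, Nw t⟫ := by
    have h := ((hΓwt t).sub (hct t)).inner_add_inner_eq_zero (hNwt t) hocc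
    rw [Pi.sub_apply, inner_sub_left (Γwt t), hvel_tangent] at h
    linarith
  have hKt : normalCurvature (Γwt t) (Nwt t) =
      -(⟪ct t, Nw t⟫ / (lam t * ‖Γw t - c t‖ ^ 2)) := by
    rw [hepip t, normalCurvature_smul, hray_normal_rate]
  change normalCurvature (Γwt t) (Nwt t) ≠ 0 →
    Γwt t = (-(⟪ct t, Nw t⟫ / normalCurvature (Γwt t) (Nwt t))) • _
  rw [hKt, neg_ne_zero, div_neg, neg_neg, smul_smul, hepip t]
  intro hK
  rw [← eq_div_div_mul_inv hK]
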